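/- arXiv:2312.11081 — 2 statements merged into one kernel-verified Lean document; each statement's English description precedes it below -/
import Mathlib

section
/- Let P be a row-finite or column-finite infinite matrix with entries in a partially ordered commutative ring. If P is totally positive of order r, then the infinite Hankel matrix ((P^{n+n'})_{00})_{n,n'≥0} is totally positive of order r. -/
/-- Row-finite infinite matrices: each row is a finitely supported function. -/
def RFMat (R : Type*) [Zero R] := ℕ → (ℕ →₀ R)

namespace RFMat

variable {R : Type*} [CommRing R]

/-- Matrix product of row-finite matrices: `(P*Q)_{ik} = ∑_j P_{ij} Q_{jk}`. -/
noncomputable def mul (P Q : RFMat R) : RFMat R :=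
  fun i => (P i).sum fun j a => a • Q j

/-- The identity matrix. -/
noncomputable def one : RFMat R := fun i => Finsupp.single i 1

/-- Matrix power `P^n`. -/
noncomputable def pow (P : RFMat R) : ℕ → RFMat R
  | 0 => one
  | n + 1 => mul (pow P n) P

end RFMat

/-- Total positivity of order `r` of a matrix given by an entry function:
all minors of size `≤ r` are nonnegative. -/
def TPordFun {R : Type*} [CommRing R] [PartialOrder R] [IsOrderedRing R] (r : ℕ) (A : ℕ → ℕ → R) : Prop :=
  ∀ m : ℕ, m ≤ r → ∀ (rr cc : Fin m → ℕ), StrictMono rr → StrictMono cc →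
    0 ≤ Matrix.det (Matrix.of fun p q : Fin m => A (rr p) (cc q))

/-!
With `O n k = (P^n)_{0k}` and `O' k n = (P^n)_{k0}`, the identity `P^{n+n'} = P^n P^{n'}` factors
the Hankel matrix as `O · O'`, so by Cauchy–Binet it suffices that `O` and `O'` are totally
positive of order `r`. The first row of `O` is `e₀` and the remaining rows form `O · P`; a minor
through row `0` is either zero or a smaller minor of the remaining rows, so total positivity of
`O` follows from that of `P` by induction on the number of rows. `O'` is the transpose of the
corresponding matrix built from `Pᵀ`.
-/

open Finset Function

theorem Finset.sum_piFinset_eq_sum_strictMono_perm {ι M : Type*} [LinearOrder ι]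
    [AddCommMonoid M] {m : ℕ} (T : Finset ι) (G : (Fin m → ι) → M)
    (hG : ∀ f, ¬ Injective f → G f = 0) :
    ∑ f ∈ Fintype.piFinset (fun _ => T), G f =
      ∑ g ∈ Fintype.piFinset (fun _ => T) with StrictMono g,
        ∑ σ : Equiv.Perm (Fin m), G (g ∘ σ) := by
  rw [← sum_product']
  symm
  refine sum_of_injOn (fun x => x.1 ∘ x.2) ?_ ?_ ?_ fun _ _ => rfl
  · rintro ⟨g, σ⟩ hgσ ⟨g', σ'⟩ hgσ' h
    simp only [mem_coe, mem_product, mem_filter] at hgσ hgσ' h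
    have hg : g = g' := (hgσ.1.2.range_inj hgσ'.1.2).mp <| by
      rw [← EquivLike.range_comp g σ, h, EquivLike.range_comp]
    subst hg
    exact Prod.ext rfl (Equiv.ext fun p => hgσ.1.2.injective (congrFun h p))
  · rintro ⟨g, σ⟩ hgσ
    simp only [mem_coe, mem_product, mem_filter, Fintype.mem_piFinset] at hgσ
    simpa using fun p => hgσ.1.1 (σ p)
  · intro f hf hnot
    refine hG f fun hinj => hnot ⟨(f ∘ Tuple.sort f, (Tuple.sort f).symm), ?_, ?_⟩
    · simp only [mem_coe, mem_product, mem_filter, Fintype.mem_piFinset] at hf ⊢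
      exact ⟨⟨fun p => hf _, (Tuple.monotone_sort f).strictMono_of_injective
        (hinj.comp (Tuple.sort f).injective)⟩, mem_univ _⟩
    · ext p
      simp

namespace Matrix

theorem det_of_sum_mul {ι R : Type*} [LinearOrder ι] [CommRing R] {m : ℕ}
    (T : Finset ι) (A : Fin m → ι → R) (B : ι → Fin m → R) :
    (of fun p q => ∑ j ∈ T, A p j * B j q).det =
      ∑ g ∈ Fintype.piFinset (fun _ => T) with StrictMono g,
        (of fun p l => A p (g l)).det * (of fun l q => B (g l) q).det := by
  have multilinear : (of fun p q => ∑ j ∈ T, A p j * B j q).det =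
      ∑ f ∈ Fintype.piFinset (fun _ => T),
        (∏ p, A p (f p)) * (of fun p q => B (f p) q).det := by
    have rows :
        (of fun p q => ∑ j ∈ T, A p j * B j q) = fun p => ∑ j ∈ T, A p j • B j := by
      ext p q
      simp
    rw [rows]
    change detRowAlternating _ = _
    rw [← AlternatingMap.coe_multilinearMap, MultilinearMap.map_sum_finset]
    refine sum_congr rfl fun f _ => ?_
    rw [MultilinearMap.map_smul_univ, smul_eq_mul]
    rfl
  rw [multilinear, sum_piFinset_eq_sum_strictMono_perm]
  · refine sum_congr rfl fun g _ => ?_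
    calc ∑ σ : Equiv.Perm (Fin m), (∏ p, A p (g (σ p))) * (of fun p q => B (g (σ p)) q).det
        = ∑ σ : Equiv.Perm (Fin m), Equiv.Perm.sign σ * (∏ p, A p (g (σ p))) *
            (of fun l q => B (g l) q).det := by
          refine sum_congr rfl fun σ _ => ?_
          rw [show (of fun p q => B (g (σ p)) q) = (of fun l q => B (g l) q).submatrix σ id
            from rfl, det_permute]
          ring
      _ = (of fun p l => A p (g l)).det * (of fun l q => B (g l) q).det := by
          rw [← det_transpose (of fun p l => A p (g l)), det_apply' (of fun p l => A p (g l))ᵀ,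
            sum_mul]
          exact sum_congr rfl fun σ _ => rfl
  · intro f hf
    obtain ⟨i, j, hij, hne⟩ := not_injective_iff.mp hf
    rw [det_zero_of_row_eq hne (funext fun q => by simp [hij]), mul_zero]

end Matrix

namespace RFMat

variable {R : Type*} [CommRing R]

theorem mul_apply_eq_linearCombination (X Y : RFMat R) (i : ℕ) :
    mul X Y i = Finsupp.linearCombination R Y (X i) :=
  (Finsupp.linearCombination_apply R (X i)).symm

theorem mul_assoc (X Y Z : RFMat R) : mul (mul X Y) Z = mul X (mul Y Z) := by
  funext i
  change _ = Finsupp.linearCombination R (fun j => mul Y Z j) (X i)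
  simp only [mul_apply_eq_linearCombination]
  exact Finsupp.linearCombination_linearCombination (R := R) Z Y (X i)

theorem one_mul (X : RFMat R) : mul one X = X := by
  funext i
  rw [mul_apply_eq_linearCombination]
  exact (Finsupp.linearCombination_single R 1 i).trans (one_smul R (X i))

theorem mul_one (X : RFMat R) : mul X one = X := by
  funext i
  simp [mul, one]

theorem pow_add (P : RFMat R) (a b : ℕ) : pow P (a + b) = mul (pow P a) (pow P b) := by
  induction b with
  | zero => exact (mul_one _).symm
  | succ b ih => rw [← add_assoc, pow, ih, mul_assoc]; rfl

theorem pow_succ' (P : RFMat R) (n : ℕ) : pow P (n + 1) = mul P (pow P n) := by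
  rw [add_comm, pow_add, pow, pow, one_mul]

theorem finite_support_mul_apply (X Y : RFMat R) (i k : ℕ) :
    (support fun j => X i j * Y j k).Finite :=
  (X i).support.finite_toSet.subset fun _ hj => Finsupp.mem_support_iff.2 (left_ne_zero_of_mul hj)

theorem mul_apply_apply (X Y : RFMat R) (i k : ℕ) : mul X Y i k = ∑ᶠ j, X i j * Y j k := by
  rw [finsum_eq_sum_of_support_subset _ (s := (X i).support) fun j hj =>
    Finsupp.mem_support_iff.2 (left_ne_zero_of_mul hj)]
  simp [mul, Finsupp.sum]

end RFMat

namespace TPordFun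

variable {R : Type*} [CommRing R] [PartialOrder R] [IsOrderedRing R] {r : ℕ}

theorem zero : TPordFun r (fun _ _ => (0 : R)) := by
  intro m _ rr cc _ _
  rcases m with _ | m
  · simp
  · rw [Matrix.det_eq_zero_of_row_eq_zero 0 fun _ => rfl]

theorem transpose {A : ℕ → ℕ → R} (hA : TPordFun r A) : TPordFun r fun i j => A j i := by
  intro m hm rr cc hrr hcc
  rw [← Matrix.det_transpose]
  exact hA m hm cc rr hcc hrr

theorem of_eq_finsum_mul {A B C : ℕ → ℕ → R} (hA : TPordFun r A) (hB : TPordFun r B)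
    (hfin : ∀ i k, (support fun j => A i j * B j k).Finite)
    (hC : ∀ i k, C i k = ∑ᶠ j, A i j * B j k) : TPordFun r C := by
  intro m hm rr cc hrr hcc
  let T : Finset ℕ := univ.biUnion fun pq : Fin m × Fin m => (hfin (rr pq.1) (cc pq.2)).toFinset
  have hsum : ∀ p q, C (rr p) (cc q) = ∑ j ∈ T, A (rr p) j * B j (cc q) := fun p q => by
    refine (hC _ _).trans (finsum_eq_sum_of_support_subset _ fun j hj => ?_)
    simpa [T] using ⟨p, q, hj⟩
  simp_rw [hsum, Matrix.det_of_sum_mul]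
  exact sum_nonneg fun g hg =>
    mul_nonneg (hA m hm rr g hrr (mem_filter.1 hg).2) (hB m hm g cc (mem_filter.1 hg).2 hcc)

theorem of_succ_rows {M : ℕ → ℕ → R} (h0 : ∀ k, M 0 k = if k = 0 then 1 else 0)
    (hM : TPordFun r fun n k => M (n + 1) k) : TPordFun r M := by
  have hpos_rows : ∀ m ≤ r, ∀ rr cc : Fin m → ℕ, StrictMono rr → StrictMono cc →
      (∀ p, rr p ≠ 0) → 0 ≤ (Matrix.of fun p q => M (rr p) (cc q)).det := by
    intro m hm rr cc hrr hcc hpos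
    have h := hM m hm (fun p => rr p - 1) cc
      (fun p p' hpp' => by have := hrr hpp'; have := hpos p; dsimp only; omega) hcc
    simpa only [Nat.sub_add_cancel (Nat.one_le_iff_ne_zero.2 (hpos _))] using h
  intro m hm rr cc hrr hcc
  rcases m with _ | m
  · simp
  by_cases hr0 : rr 0 = 0
  swap
  · exact hpos_rows _ hm rr cc hrr hcc fun p => by
      have := hrr.monotone (Fin.zero_le p); omega
  have row0 : ∀ q, M (rr 0) (cc q) = if cc q = 0 then 1 else 0 := fun q => by rw [hr0, h0]
  have hcpos : ∀ q : Fin m, cc q.succ ≠ 0 := fun q => by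
    have := hcc (Fin.succ_pos q); omega
  by_cases hc0 : cc 0 = 0
  · rw [Matrix.det_succ_row_zero, Fin.sum_univ_succ, sum_eq_zero fun q _ => by
      rw [Matrix.of_apply, row0, if_neg (hcpos q), mul_zero, zero_mul]]
    rw [Matrix.of_apply, row0, if_pos hc0, Fin.succAbove_zero]
    simp only [Fin.val_zero, pow_zero, one_mul, mul_one, add_zero]
    exact hpos_rows m (by omega) _ _ (hrr.comp Fin.strictMono_succ)
      (hcc.comp Fin.strictMono_succ) fun p => by have := hrr (Fin.succ_pos p); omega
  · rw [Matrix.det_eq_zero_of_row_eq_zero 0 fun q => by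
      rw [Matrix.of_apply, row0, if_neg]
      have := hcc.monotone (Fin.zero_le q); omega]

theorem of_succ_eq_finsum_mul {O Q : ℕ → ℕ → R} (hQ : TPordFun r Q)
    (h0 : ∀ k, O 0 k = if k = 0 then 1 else 0)
    (hfin : ∀ n k, (support fun j => O n j * Q j k).Finite)
    (hsucc : ∀ n k, O (n + 1) k = ∑ᶠ j, O n j * Q j k) : TPordFun r O := by
  have htrunc : ∀ N, TPordFun r fun n k => if n < N then O n k else 0 := by
    intro N
    induction N with
    | zero => simpa using zero
    | succ N ih =>
      refine of_succ_rows (by simpa using h0) (ih.of_eq_finsum_mul hQ (fun n k => ?_) fun n k => ?_)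
      · refine (hfin n k).subset fun j hj => ?_
        split_ifs at hj <;> simp_all
      · by_cases hn : n < N
        · simp [hn, hsucc]
        · simp [hn]
  intro m hm rr cc hrr hcc
  have hlt : ∀ p, rr p < ∑ p, rr p + 1 := fun p =>
    Nat.lt_succ_of_le (single_le_sum (fun _ _ => Nat.zero_le _) (mem_univ p))
  simpa [hlt] using htrunc (∑ p, rr p + 1) m hm rr cc hrr hcc

end TPordFun

namespace RFMat

variable {R : Type*} [CommRing R] [PartialOrder R] [IsOrderedRing R] {r : ℕ} {P : RFMat R}

theorem tpordFun_pow_row_zero (hP : TPordFun r fun i j => P i j) :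
    TPordFun r fun n k => pow P n 0 k :=
  hP.of_succ_eq_finsum_mul (fun k => by simp [pow, one, Finsupp.single_apply, eq_comm])
    (fun n k => finite_support_mul_apply (pow P n) P 0 k) fun n k => mul_apply_apply _ _ 0 k

theorem tpordFun_pow_column_zero (hP : TPordFun r fun i j => P i j) :
    TPordFun r fun k n => pow P n k 0 := by
  refine TPordFun.transpose <| hP.transpose.of_succ_eq_finsum_mul
    (fun k => by simp [pow, one, Finsupp.single_apply]) (fun n k => ?_) fun n k => ?_
  · simpa only [_root_.mul_comm] using finite_support_mul_apply P (pow P n) k 0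
  · simp_rw [pow_succ', mul_apply_apply, _root_.mul_comm]

end RFMat

/-- If a row-finite matrix `P` over a partially ordered
commutative ring is totally positive of order `r`, then so is the infinite
Hankel matrix `((P^{n+n'})_{00})_{n,n'≥0}`. -/
theorem hankel_totally_positive {R : Type*} [CommRing R] [PartialOrder R] [IsOrderedRing R]
    (r : ℕ) (P : RFMat R) (hP : TPordFun r fun i j => P i j) :
    TPordFun r fun n n' => RFMat.pow P (n + n') 0 0 :=
  (RFMat.tpordFun_pow_row_zero hP).of_eq_finsum_mul (RFMat.tpordFun_pow_column_zero hP)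
    (fun n _ => RFMat.finite_support_mul_apply _ _ 0 0) fun n n' => by
      rw [RFMat.pow_add, RFMat.mul_apply_apply]
end

section
/- Let L be the lower-bidiagonal matrix with 1 on the diagonal and 1,2,3,... on the subdiagonal, Δ the matrix with 1 on the superdiagonal and zeroes elsewhere, and U_x = Δ + xI. Then LΔ + I = ΔL, and consequently LU_x + I = U_x L; hence the Laguerre production matrix with λ = 1 satisfies P = L(LU_x + I) = L U_x L. -/
open Polynomial

/-- The lower-bidiagonal matrix `L` with `1` on the diagonal and `1,2,3,…` on
the subdiagonal, over `ℤ[x]`. -/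
noncomputable def Lmat : RFMat (Polynomial ℤ) :=
  fun n => Finsupp.single n 1 + Finsupp.single (n - 1) (n : Polynomial ℤ)

/-- The shift matrix `Δ`, with `1` on the superdiagonal and `0` elsewhere. -/
noncomputable def Dmat : RFMat (Polynomial ℤ) :=
  fun n => Finsupp.single (n + 1) 1

/-- The upper-bidiagonal matrix `U_x = Δ + xI`, with `1` on the superdiagonal
and `x` on the diagonal. -/
noncomputable def Uxmat : RFMat (Polynomial ℤ) :=
  fun n => Finsupp.single (n + 1) 1 + Finsupp.single n X

/-- The quadridiagonal univariate Laguerre production matrix with `λ = 1`: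
`p_{n,n+1} = 1`, `p_{n,n} = 2n+1+x`, `p_{n,n-1} = n·n+2nx`,
`p_{n,n-2} = n(n-1)x`. -/
noncomputable def Pone : RFMat (Polynomial ℤ) :=
  fun n => Finsupp.single (n + 1) 1
    + Finsupp.single n (2 * (n : Polynomial ℤ) + 1 + X)
    + Finsupp.single (n - 1) ((n : Polynomial ℤ) * (n : Polynomial ℤ)
        + 2 * (n : Polynomial ℤ) * X)
    + Finsupp.single (n - 2) ((n : Polynomial ℤ) * ((n : Polynomial ℤ) - 1) * X)

/-! Left multiplication by `L`, `Δ` and `U_x` acts on rows as `(LQ)_n = Q_n + n Q_{n-1}`,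
`(ΔQ)_n = Q_{n+1}` and `(U_x Q)_n = (ΔQ)_n + x Q_n`, so every identity becomes a linear
relation between unit rows `e_k`. Since `U_x = Δ + xI`, the relation `LU_x + I = U_x L` is
`LΔ + I = ΔL` with `x L` added to both sides. -/

namespace RFMat

variable {R : Type*} [CommRing R]

theorem mul_apply (P Q : RFMat R) (i : ℕ) :
    mul P Q i = Finsupp.linearCombination R (fun j => Q j) (P i) :=
  (Finsupp.linearCombination_apply R (P i)).symm

end RFMat

theorem natCast_smul_pred_eq {R M : Type*} [Semiring R] [AddCommMonoid M] [Module R M]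
    {f g : ℕ → M} (hfg : ∀ m, g (m + 1) = f m) (n : ℕ) :
    (n : R) • f (n - 1) = (n : R) • g n := by
  cases n with
  | zero => simp
  | succ m => simp [hfg]

open Finsupp

theorem Lmat_apply (n : ℕ) : Lmat n = single n 1 + (n : ℤ[X]) • single (n - 1) 1 := by
  rw [smul_single_one]; rfl

theorem Uxmat_apply (n : ℕ) : Uxmat n = Dmat n + (X : ℤ[X]) • single n 1 := by
  rw [smul_single_one]; rfl

theorem Pone_apply (n : ℕ) :
    Pone n = single (n + 1) 1 + (2 * (n : ℤ[X]) + 1 + X) • single n 1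
      + ((n : ℤ[X]) * (n : ℤ[X]) + 2 * (n : ℤ[X]) * X) • single (n - 1) 1
      + ((n : ℤ[X]) * ((n : ℤ[X]) - 1) * X) • single (n - 2) 1 := by
  simp only [Pone, smul_single_one]

theorem Lmat_mul_apply (Q : RFMat ℤ[X]) (n : ℕ) :
    RFMat.mul Lmat Q n = Q n + (n : ℤ[X]) • Q (n - 1) := by
  simp [RFMat.mul_apply, Lmat_apply, linearCombination_single]

theorem Dmat_mul_apply (Q : RFMat ℤ[X]) (n : ℕ) : RFMat.mul Dmat Q n = Q (n + 1) := by
  simp [RFMat.mul_apply, Dmat, linearCombination_single]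

theorem Uxmat_mul_apply (Q : RFMat ℤ[X]) (n : ℕ) :
    RFMat.mul Uxmat Q n = RFMat.mul Dmat Q n + (X : ℤ[X]) • Q n := by
  simp [RFMat.mul_apply, Uxmat_apply, Dmat, linearCombination_single]

theorem Lmat_mul_Dmat_add_one_apply (n : ℕ) :
    RFMat.mul Lmat Dmat n + single n 1 = RFMat.mul Dmat Lmat n := by
  have hshift : (n : ℤ[X]) • Dmat (n - 1) = (n : ℤ[X]) • single n 1 :=
    natCast_smul_pred_eq (g := fun m => single m 1) (fun _ => rfl) n
  rw [Lmat_mul_apply, hshift, Dmat_mul_apply, Lmat_apply]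
  simp only [Dmat, add_tsub_cancel_right, Nat.cast_add, Nat.cast_one]
  module

theorem Lmat_mul_Uxmat_add_one_apply (n : ℕ) :
    RFMat.mul Lmat Uxmat n + single n 1 = RFMat.mul Uxmat Lmat n := by
  rw [Lmat_mul_apply, Uxmat_mul_apply, ← Lmat_mul_Dmat_add_one_apply, Lmat_mul_apply,
    Uxmat_apply, Uxmat_apply, Lmat_apply]
  module

theorem Pone_eq_Lmat_mul_Uxmat_mul_Lmat : Pone = RFMat.mul Lmat (RFMat.mul Uxmat Lmat) := by
  funext n
  simp only [Lmat_mul_apply, Uxmat_mul_apply, Dmat_mul_apply, Lmat_apply, Pone_apply]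
  cases n with
  | zero => simp only [Nat.zero_sub, Nat.cast_zero, zero_add]; module
  | succ p =>
    simp only [add_tsub_cancel_right, Nat.cast_add, Nat.cast_one,
      show p + 1 - 2 = p - 1 by omega]
    module

/-- `LΔ + I = ΔL`, hence `LU_x + I = U_x L`, and hence the
Laguerre production matrix with `λ = 1` satisfies
`P = L(LU_x + I) = L U_x L`. -/
theorem LDelta_commutation_and_Pone_factorization :
    (fun n => RFMat.mul Lmat Dmat n + Finsupp.single n (1 : Polynomial ℤ))
        = RFMat.mul Dmat Lmat ∧
    (fun n => RFMat.mul Lmat Uxmat n + Finsupp.single n (1 : Polynomial ℤ))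
        = RFMat.mul Uxmat Lmat ∧
    Pone = RFMat.mul Lmat
        (fun n => RFMat.mul Lmat Uxmat n + Finsupp.single n (1 : Polynomial ℤ)) ∧
    Pone = RFMat.mul Lmat (RFMat.mul Uxmat Lmat) := by
  have hLU : (fun n => RFMat.mul Lmat Uxmat n + Finsupp.single n (1 : Polynomial ℤ))
      = RFMat.mul Uxmat Lmat := funext Lmat_mul_Uxmat_add_one_apply
  exact ⟨funext Lmat_mul_Dmat_add_one_apply, hLU, hLU ▸ Pone_eq_Lmat_mul_Uxmat_mul_Lmat,
    Pone_eq_Lmat_mul_Uxmat_mul_Lmat⟩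
end
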